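/- Let ℓ and m be positive even integers and a, b, x, μ real numbers. Let D be the ℓ×ℓ diagonal matrix with entries x + 2ι a cos(kπ/(ℓ+1)) for k = 1, …, ℓ; let J' be the ℓ×ℓ matrix whose (p, ℓ+1-p) entries are ι^{ℓ-1} (-1)^{ℓ-p} and whose other entries are 0; and let B be the m×m matrix with diagonal entries 2ι b cos(sπ/(m+1)) and anti-diagonal entries B_{s,m+1-s} = (-1)^{m-s} ι^m μ, zeros elsewhere. Then det( I_m ⊗ D + B ⊗ J' ) = ∏_{s=1}^{m/2} ∏_{k=1}^{ℓ/2} ( x^2 + 4a^2 cos^2(kπ/(ℓ+1)) + 4b^2 cos^2(sπ/(m+1)) + μ^2 )^2. -/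

import Mathlib

/-!
Reversing the inner index conjugates `D(a)` to `D(-a)` and, as `ℓ` is even, `J'` to `-J'`; so
`N = I ⊗ D(-a) - B ⊗ J'` has the same determinant as `M = I ⊗ D(a) + B ⊗ J'`. Since
`J' D(-a) = D(a) J'`, `J'² = 1` and `B² = -diag(4b² cos²(sπ/(m+1)) + μ²)` (the diagonal and
anti-diagonal parts of `B` anticommute), `M N` is the diagonal matrix with entries
`x² + 4a² cos²(kπ/(ℓ+1)) + 4b² cos²(sπ/(m+1)) + μ²`, and `cos((n+1-k)π/(n+1)) = -cos(kπ/(n+1))`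
makes each factor occur four times. This determines `det M` up to sign. The sign is fixed by
viewing both sides as monic polynomials in `x`: monic polynomials with equal squares are equal.
-/

open scoped Kronecker

/-- The `m × m` matrix `B` with diagonal entries `B_{s,s} = 2 ι b cos(sπ/(m+1))`,
anti-diagonal entries `B_{s,m+1-s} = (-1)^{m-s} ι^m μ` (1-based indexing) and zeros
elsewhere. -/
noncomputable def Bmat (m : ℕ) (b μ : ℝ) : Matrix (Fin m) (Fin m) ℂ :=
  Matrix.of fun i j =>
    if i = j then
      2 * Complex.I * (b : ℂ) *
        ((Real.cos (((i : ℕ) + 1) * Real.pi / ((m : ℝ) + 1)) : ℝ) : ℂ)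
    else if (i : ℕ) + (j : ℕ) + 1 = m then
      (-1) ^ (m - 1 - (i : ℕ)) * Complex.I ^ m * (μ : ℂ)
    else 0

/-- The `ℓ × ℓ` diagonal matrix `D` with entries `x + 2 ι a cos(kπ/(ℓ+1))`, `k = 1, …, ℓ`. -/
noncomputable def Dmat (l : ℕ) (a x : ℝ) : Matrix (Fin l) (Fin l) ℂ :=
  Matrix.diagonal fun k =>
    (x : ℂ) + 2 * Complex.I * (a : ℂ) *
      ((Real.cos (((k : ℕ) + 1) * Real.pi / ((l : ℝ) + 1)) : ℝ) : ℂ)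

/-- The `ℓ × ℓ` anti-diagonal matrix `J'` whose `(p, ℓ+1-p)` entry is `ι^{ℓ-1} (-1)^{ℓ-p}`
(1-based indexing), with zeros elsewhere. -/
noncomputable def Jprime (l : ℕ) : Matrix (Fin l) (Fin l) ℂ :=
  Matrix.of fun p q =>
    if (p : ℕ) + (q : ℕ) + 1 = l then
      Complex.I ^ (l - 1) * (-1) ^ (l - 1 - (p : ℕ))
    else 0

open Matrix Polynomial

theorem Polynomial.Monic.eq_of_sq_eval_eq {R : Type*} [CommRing R] [IsDomain R] [NeZero (2 : R)]
    {p q : R[X]} (hp : p.Monic) (hq : q.Monic) {s : Set R} (hs : s.Infinite)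
    (h : ∀ x ∈ s, p.eval x ^ 2 = q.eval x ^ 2) : p = q := by
  have hsq : p ^ 2 = q ^ 2 :=
    eq_of_infinite_eval_eq _ _ (hs.mono fun x hx => by simpa using h x hx)
  refine (sq_eq_sq_iff_eq_or_eq_neg.mp hsq).resolve_right fun hneg => ?_
  have hlead := congrArg Polynomial.leadingCoeff hneg
  rw [hp.leadingCoeff, leadingCoeff_neg, hq.leadingCoeff] at hlead
  exact two_ne_zero (by linear_combination hlead : (2 : R) = 0)

theorem Finset.prod_range_add_self_eq_sq {M : Type*} [CommMonoid M] (f : ℕ → M) (h : ℕ)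
    (hf : ∀ i < h, f (h + i) = f (h - 1 - i)) :
    ∏ i ∈ range (h + h), f i = (∏ i ∈ range h, f i) ^ 2 := by
  rw [prod_range_add, ← prod_range_reflect f h, sq]
  congr 1
  exact prod_congr rfl fun i hi => hf i (mem_range.mp hi)

theorem Finset.prod_fin_eq_sq_prod_Icc_half {M : Type*} [CommMonoid M] {n : ℕ} (hn : Even n)
    (g : ℕ → M) (hg : ∀ k, 1 ≤ k → k ≤ n → g (n + 1 - k) = g k) :
    ∏ i : Fin n, g (i + 1) = (∏ k ∈ Icc 1 (n / 2), g k) ^ 2 := by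
  obtain ⟨h, rfl⟩ := hn
  have hIcc : ∏ k ∈ Icc 1 h, g k = ∏ i ∈ range h, g (i + 1) := by
    rw [← Ico_add_one_right_eq_Icc, prod_Ico_eq_prod_range]
    simp only [add_tsub_cancel_right, add_comm 1]
  rw [Fin.prod_univ_eq_prod_range (fun i => g (i + 1)), show (h + h) / 2 = h by omega, hIcc]
  refine prod_range_add_self_eq_sq _ h fun i hi => ?_
  rw [← hg (h - 1 - i + 1) (by omega) (by omega)]
  congr 1
  omega

theorem Fin.val_add_val_add_one_eq_iff_eq_rev {n : ℕ} {p q : Fin n} :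
    (p : ℕ) + q + 1 = n ↔ q = p.rev := by
  rw [Fin.ext_iff, Fin.val_rev]
  omega

theorem Fin.neg_one_pow_sub_mul_neg_one_pow_sub_rev {R : Type*} [Monoid R] [HasDistribNeg R]
    {n : ℕ} (p : Fin n) : (-1 : R) ^ (n - 1 - p) * (-1) ^ (n - 1 - p.rev) = (-1) ^ (n - 1) := by
  rw [← pow_add, Fin.val_rev]
  congr 1
  omega

namespace Matrix

variable {R : Type*} {n : ℕ}

def antidiagonal [Zero R] (v : Fin n → R) : Matrix (Fin n) (Fin n) R :=
  of fun p q => if (p : ℕ) + q + 1 = n then v p else 0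

theorem antidiagonal_apply [Zero R] (v : Fin n → R) (p q : Fin n) :
    antidiagonal v p q = if q = p.rev then v p else 0 := by
  simp only [antidiagonal, of_apply, Fin.val_add_val_add_one_eq_iff_eq_rev]

theorem antidiagonal_submatrix_rev [Zero R] (v : Fin n → R) :
    (antidiagonal v).submatrix Fin.rev Fin.rev = antidiagonal fun p => v p.rev := by
  ext p q
  simp only [submatrix_apply, antidiagonal_apply, Fin.rev_inj]

theorem antidiagonal_neg [NegZeroClass R] (v : Fin n → R) :
    antidiagonal (-v) = -antidiagonal v := by
  ext p q
  simp only [antidiagonal_apply, neg_apply, Pi.neg_apply]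
  split_ifs <;> simp

theorem antidiagonal_mul_antidiagonal [NonUnitalNonAssocSemiring R] (v w : Fin n → R) :
    antidiagonal v * antidiagonal w = diagonal fun p => v p * w p.rev := by
  ext p q
  rw [mul_apply, Finset.sum_eq_single p.rev]
  · simp only [antidiagonal_apply, diagonal_apply, Fin.rev_rev, eq_comm (a := q)]
    split_ifs <;> simp_all
  · intro r _ hr
    simp [antidiagonal_apply, hr]
  · simp

theorem antidiagonal_mul_diagonal [NonUnitalNonAssocCommSemiring R] (v d : Fin n → R) :
    antidiagonal v * diagonal d = diagonal (fun p => d p.rev) * antidiagonal v := by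
  ext p q
  simp only [mul_diagonal, diagonal_mul, antidiagonal_apply]
  split_ifs with hq
  · rw [hq, mul_comm]
  · simp

theorem one_kronecker_add_mul_one_kronecker_sub [CommRing R] {ι κ : Type*} [Fintype ι]
    [DecidableEq ι] [Fintype κ] [DecidableEq κ] {D D' J : Matrix κ κ R} (B : Matrix ι ι R)
    (h : J * D' = D * J) :
    (1 ⊗ₖ D + B ⊗ₖ J) * (1 ⊗ₖ D' - B ⊗ₖ J) = 1 ⊗ₖ (D * D') - (B * B) ⊗ₖ (J * J) := by
  simp only [add_mul, mul_sub, ← mul_kronecker_mul, Matrix.one_mul, Matrix.mul_one, h]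
  abel

end Matrix

namespace GridBlock

open Complex

noncomputable def cosNode (n k : ℕ) : ℝ := Real.cos (k * Real.pi / (n + 1))

theorem cosNode_sub {n k : ℕ} (hk : k ≤ n + 1) : cosNode n (n + 1 - k) = -cosNode n k := by
  have hpos : (n : ℝ) + 1 ≠ 0 := by positivity
  rw [cosNode, cosNode, Nat.cast_sub hk, ← Real.cos_pi_sub]
  congr 1
  field_simp
  push_cast
  ring

theorem cosNode_rev {n : ℕ} (p : Fin n) :
    cosNode n ((p.rev : ℕ) + 1) = -cosNode n ((p : ℕ) + 1) := by
  rw [← cosNode_sub (by omega)]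
  congr 1
  rw [Fin.val_rev]
  omega

theorem Dmat_eq_diagonal (l : ℕ) (a x : ℝ) :
    Dmat l a x = diagonal fun p : Fin l => x + 2 * I * a * cosNode l ((p : ℕ) + 1) := by
  simp [Dmat, cosNode]

theorem Dmat_submatrix_rev (l : ℕ) (a x : ℝ) :
    (Dmat l a x).submatrix Fin.rev Fin.rev = Dmat l (-a) x := by
  rw [Dmat_eq_diagonal, Dmat_eq_diagonal]
  exact (submatrix_diagonal_equiv _ Fin.revPerm).trans
    (congrArg diagonal (funext fun p => by
      simp only [Function.comp_apply, Fin.revPerm_apply, cosNode_rev, ofReal_neg]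
      ring))

theorem Jprime_eq_antidiagonal (l : ℕ) :
    Jprime l = antidiagonal fun p => I ^ (l - 1) * (-1) ^ (l - 1 - p) := rfl

theorem Jprime_mul_self (l : ℕ) : Jprime l * Jprime l = 1 := by
  rw [Jprime_eq_antidiagonal, antidiagonal_mul_antidiagonal, ← diagonal_one]
  congr 1
  funext p
  rw [mul_mul_mul_comm, Fin.neg_one_pow_sub_mul_neg_one_pow_sub_rev, ← pow_add, ← two_mul,
    pow_mul, I_sq, ← pow_add, ← two_mul, pow_mul, neg_one_sq, one_pow]

theorem Jprime_mul_Dmat (l : ℕ) (a x : ℝ) :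
    Jprime l * Dmat l (-a) x = Dmat l a x * Jprime l := by
  rw [Dmat_eq_diagonal, Dmat_eq_diagonal, Jprime_eq_antidiagonal, antidiagonal_mul_diagonal]
  congr 2
  funext p
  simp only [cosNode_rev, ofReal_neg]
  ring

theorem Jprime_submatrix_rev {l : ℕ} (hl : Even l) :
    (Jprime l).submatrix Fin.rev Fin.rev = -Jprime l := by
  rw [Jprime_eq_antidiagonal, antidiagonal_submatrix_rev, ← antidiagonal_neg]
  congr 1
  funext p
  have hp := p.isLt
  have hodd : (-1 : ℂ) ^ (l - 1) = -1 := (Nat.Even.sub_odd (by omega) hl odd_one).neg_one_pow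
  have hprod := Fin.neg_one_pow_sub_mul_neg_one_pow_sub_rev (R := ℂ) p
  rw [hodd] at hprod
  have hsq : (-1 : ℂ) ^ (l - 1 - p) * (-1) ^ (l - 1 - p) = 1 := by
    rw [← mul_pow, neg_one_mul, neg_neg, one_pow]
  simp only [Pi.neg_apply]
  linear_combination (I ^ (l - 1) * (-1) ^ (l - 1 - p)) * hprod
    - I ^ (l - 1) * (-1) ^ (l - 1 - p.rev) * hsq

theorem Bmat_eq {m : ℕ} (hm : Even m) (b μ : ℝ) :
    Bmat m b μ = diagonal (fun s : Fin m => 2 * I * b * cosNode m ((s : ℕ) + 1))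
      + antidiagonal fun s => (-1) ^ (m - 1 - s) * I ^ m * μ := by
  ext i j
  by_cases hij : i = j
  · subst hij
    have hanti : ¬(i : ℕ) + i + 1 = m := by
      obtain ⟨r, rfl⟩ := hm
      omega
    simp [Bmat, antidiagonal, hanti, cosNode]
  · simp [Bmat, antidiagonal, hij]

theorem Bmat_mul_self {m : ℕ} (hm : Even m) (b μ : ℝ) :
    Bmat m b μ * Bmat m b μ
      = diagonal fun s : Fin m => -((4 * b ^ 2 * cosNode m ((s : ℕ) + 1) ^ 2 + μ ^ 2 : ℝ) : ℂ) := by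
  set d : Fin m → ℂ := fun s => 2 * I * b * cosNode m ((s : ℕ) + 1)
  set A := antidiagonal fun s : Fin m => (-1) ^ (m - 1 - s) * I ^ m * (μ : ℂ)
  have hAd : A * diagonal d = -(diagonal d * A) := by
    rw [antidiagonal_mul_diagonal, ← neg_mul, diagonal_neg]
    congr 2
    funext s
    simp only [d, cosNode_rev, ofReal_neg]
    ring
  have hAA : A * A = diagonal fun _ => -(μ : ℂ) ^ 2 := by
    rw [antidiagonal_mul_antidiagonal]
    congr 1
    funext s
    have hs := s.isLt
    have hexp : (-1 : ℂ) ^ (m - 1) * (-1) ^ m = -1 := by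
      rw [← pow_add, show m - 1 + m = 2 * (m - 1) + 1 by omega, pow_succ, pow_mul, neg_one_sq,
        one_pow, one_mul]
    calc (-1) ^ (m - 1 - s) * I ^ m * (μ : ℂ) * ((-1) ^ (m - 1 - s.rev) * I ^ m * μ)
        = ((-1) ^ (m - 1 - s) * (-1) ^ (m - 1 - s.rev)) * (I ^ 2) ^ m * μ ^ 2 := by ring
      _ = -(μ : ℂ) ^ 2 := by
        rw [Fin.neg_one_pow_sub_mul_neg_one_pow_sub_rev, I_sq, hexp]
        ring
  rw [Bmat_eq hm, add_mul, mul_add, mul_add, hAd, hAA, diagonal_mul_diagonal, add_assoc,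
    ← add_assoc _ (-_), add_neg_cancel, zero_add, diagonal_add]
  congr 1
  funext s
  push_cast
  linear_combination (4 * (b : ℂ) ^ 2 * cosNode m ((s : ℕ) + 1) ^ 2) * I_sq

noncomputable def gridBlock (l m : ℕ) (a b x μ : ℝ) : Matrix (Fin m × Fin l) (Fin m × Fin l) ℂ :=
  (1 : Matrix (Fin m) (Fin m) ℂ) ⊗ₖ Dmat l a x + Bmat m b μ ⊗ₖ Jprime l

noncomputable def gridFactor (l m : ℕ) (a b x μ : ℝ) (s k : ℕ) : ℝ :=
  x ^ 2 + 4 * a ^ 2 * cosNode l k ^ 2 + 4 * b ^ 2 * cosNode m s ^ 2 + μ ^ 2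

variable {l m : ℕ} {a b x μ : ℝ}

theorem gridBlock_submatrix_rev (hl : Even l) :
    (gridBlock l m a b x μ).submatrix (Prod.map id Fin.rev) (Prod.map id Fin.rev)
      = 1 ⊗ₖ Dmat l (-a) x - Bmat m b μ ⊗ₖ Jprime l := by
  rw [gridBlock, submatrix_add, Pi.add_apply, Pi.add_apply, ← kroneckerMap_submatrix_right,
    ← kroneckerMap_submatrix_right, Dmat_submatrix_rev, Jprime_submatrix_rev hl, sub_eq_add_neg]
  congr 1
  ext
  simp

theorem gridBlock_mul_submatrix_rev (hl : Even l) (hm : Even m) :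
    gridBlock l m a b x μ
        * (gridBlock l m a b x μ).submatrix (Prod.map id Fin.rev) (Prod.map id Fin.rev)
      = diagonal fun p => (gridFactor l m a b x μ ((p.1 : ℕ) + 1) ((p.2 : ℕ) + 1) : ℂ) := by
  rw [gridBlock_submatrix_rev hl, gridBlock,
    one_kronecker_add_mul_one_kronecker_sub _ (Jprime_mul_Dmat l a x), Jprime_mul_self,
    Bmat_mul_self hm, Dmat_eq_diagonal, Dmat_eq_diagonal, diagonal_mul_diagonal, ← diagonal_one,
    diagonal_kronecker_diagonal, ← diagonal_one, diagonal_kronecker_diagonal, diagonal_sub]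
  congr 1
  funext p
  simp only [gridFactor]
  push_cast
  linear_combination (-4 * (a : ℂ) ^ 2 * cosNode l ((p.2 : ℕ) + 1) ^ 2) * I_sq

theorem det_gridBlock_sq (hl : Even l) (hm : Even m) :
    (gridBlock l m a b x μ).det ^ 2
      = ∏ p : Fin m × Fin l, (gridFactor l m a b x μ ((p.1 : ℕ) + 1) ((p.2 : ℕ) + 1) : ℂ) := by
  have hrev : ((gridBlock l m a b x μ).submatrix (Prod.map id Fin.rev) (Prod.map id Fin.rev)).det
      = (gridBlock l m a b x μ).det :=
    det_submatrix_equiv_self ((Equiv.refl (Fin m)).prodCongr Fin.revPerm) _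
  rw [sq]
  nth_rw 2 [← hrev]
  rw [← det_mul, gridBlock_mul_submatrix_rev hl hm, det_diagonal]

theorem gridFactor_sub_left {s : ℕ} (k : ℕ) (hs : s ≤ m + 1) :
    gridFactor l m a b x μ (m + 1 - s) k = gridFactor l m a b x μ s k := by
  simp only [gridFactor, cosNode_sub hs, neg_sq]

theorem gridFactor_sub_right (s : ℕ) {k : ℕ} (hk : k ≤ l + 1) :
    gridFactor l m a b x μ s (l + 1 - k) = gridFactor l m a b x μ s k := by
  simp only [gridFactor, cosNode_sub hk, neg_sq]

theorem prod_gridFactor (hl : Even l) (hm : Even m) :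
    ∏ p : Fin m × Fin l, (gridFactor l m a b x μ ((p.1 : ℕ) + 1) ((p.2 : ℕ) + 1) : ℂ)
      = (∏ s ∈ Finset.Icc 1 (m / 2), ∏ k ∈ Finset.Icc 1 (l / 2),
          (gridFactor l m a b x μ s k : ℂ) ^ 2) ^ 2 := by
  rw [Fintype.prod_prod_type]
  calc ∏ s : Fin m, ∏ p : Fin l, (gridFactor l m a b x μ ((s : ℕ) + 1) ((p : ℕ) + 1) : ℂ)
      = ∏ s : Fin m,
          (∏ k ∈ Finset.Icc 1 (l / 2), (gridFactor l m a b x μ ((s : ℕ) + 1) k : ℂ)) ^ 2 :=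
        Finset.prod_congr rfl fun s _ => Finset.prod_fin_eq_sq_prod_Icc_half hl
          (fun k => (gridFactor l m a b x μ ((s : ℕ) + 1) k : ℂ))
          fun k _ hk => by rw [gridFactor_sub_right _ (by omega)]
    _ = (∏ s ∈ Finset.Icc 1 (m / 2), (∏ k ∈ Finset.Icc 1 (l / 2),
          (gridFactor l m a b x μ s k : ℂ)) ^ 2) ^ 2 :=
        Finset.prod_fin_eq_sq_prod_Icc_half hm
          (fun s => (∏ k ∈ Finset.Icc 1 (l / 2), (gridFactor l m a b x μ s k : ℂ)) ^ 2)
          fun s _ hs => by simp only [gridFactor_sub_left _ (show s ≤ m + 1 by omega)]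
    _ = _ := by simp_rw [Finset.prod_pow]

theorem Dmat_eq_smul_one_add : Dmat l a x = (x : ℂ) • 1 + Dmat l a 0 := by
  rw [Dmat_eq_diagonal, Dmat_eq_diagonal, smul_one_eq_diagonal, diagonal_add]
  simp

theorem gridBlock_eq_smul_one_add :
    gridBlock l m a b x μ = (x : ℂ) • 1 + gridBlock l m a b 0 μ := by
  rw [gridBlock, gridBlock, Dmat_eq_smul_one_add, kronecker_add, kronecker_smul, one_kronecker_one,
    add_assoc]

theorem det_gridBlock_eq_eval_charpoly :
    (gridBlock l m a b x μ).det = (-gridBlock l m a b 0 μ).charpoly.eval (x : ℂ) := by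
  rw [eval_charpoly, sub_neg_eq_add, scalar_apply, ← smul_one_eq_diagonal,
    ← gridBlock_eq_smul_one_add]

noncomputable def gridPoly (l m : ℕ) (a b μ : ℝ) : ℂ[X] :=
  ∏ s ∈ Finset.Icc 1 (m / 2), ∏ k ∈ Finset.Icc 1 (l / 2),
    (X ^ 2 + C (gridFactor l m a b 0 μ s k : ℂ)) ^ 2

theorem gridPoly_monic : (gridPoly l m a b μ).Monic :=
  monic_prod_of_monic _ _ fun _ _ => monic_prod_of_monic _ _ fun _ _ =>
    (monic_X_pow_add_C _ two_ne_zero).pow 2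

theorem eval_gridPoly :
    (gridPoly l m a b μ).eval (x : ℂ)
      = ∏ s ∈ Finset.Icc 1 (m / 2), ∏ k ∈ Finset.Icc 1 (l / 2),
          (gridFactor l m a b x μ s k : ℂ) ^ 2 := by
  simp only [gridPoly, eval_prod, eval_pow, eval_add, eval_X, eval_C]
  refine Finset.prod_congr rfl fun s _ => Finset.prod_congr rfl fun k _ => ?_
  simp only [gridFactor]
  push_cast
  ring

end GridBlock

open GridBlock

theorem det_block_general (l m : ℕ) (hl : Even l) (hm : Even m)
    (a b x μ : ℝ) :
    ((1 : Matrix (Fin m) (Fin m) ℂ) ⊗ₖ Dmat l a x + Bmat m b μ ⊗ₖ Jprime l).det =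
      ∏ s ∈ Finset.Icc 1 (m / 2), ∏ k ∈ Finset.Icc 1 (l / 2),
        (((x ^ 2 + 4 * a ^ 2 * Real.cos ((k : ℝ) * Real.pi / ((l : ℝ) + 1)) ^ 2
          + 4 * b ^ 2 * Real.cos ((s : ℝ) * Real.pi / ((m : ℝ) + 1)) ^ 2
          + μ ^ 2 : ℝ) : ℂ)) ^ 2 := by
  have hpoly : (-gridBlock l m a b 0 μ).charpoly = gridPoly l m a b μ := by
    refine (charpoly_monic _).eq_of_sq_eval_eq gridPoly_monic
      (Set.infinite_range_of_injective Complex.ofReal_injective) ?_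
    rintro _ ⟨y, rfl⟩
    rw [← det_gridBlock_eq_eval_charpoly, eval_gridPoly, det_gridBlock_sq hl hm,
      prod_gridFactor hl hm]
  exact det_gridBlock_eq_eval_charpoly.trans (hpoly ▸ eval_gridPoly)

/-- The determinant of the block `F_j = I_m ⊗ D + B ⊗ J'` arising in the
block-diagonalization of the generalised adjacency matrix of the three-dimensional grid:
`det(I_m ⊗ D + B ⊗ J') = ∏_{s=1}^{m/2} ∏_{k=1}^{ℓ/2}
(x² + 4a² cos²(kπ/(ℓ+1)) + 4b² cos²(sπ/(m+1)) + μ²)²`. -/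
theorem det_block (l m : ℕ) (hl : Even l) (hl0 : 0 < l) (hm : Even m) (hm0 : 0 < m)
    (a b x μ : ℝ) :
    ((1 : Matrix (Fin m) (Fin m) ℂ) ⊗ₖ Dmat l a x + Bmat m b μ ⊗ₖ Jprime l).det =
      ∏ s ∈ Finset.Icc 1 (m / 2), ∏ k ∈ Finset.Icc 1 (l / 2),
        (((x ^ 2 + 4 * a ^ 2 * Real.cos ((k : ℝ) * Real.pi / ((l : ℝ) + 1)) ^ 2
          + 4 * b ^ 2 * Real.cos ((s : ℝ) * Real.pi / ((m : ℝ) + 1)) ^ 2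
          + μ ^ 2 : ℝ) : ℂ)) ^ 2 :=
  det_block_general l m hl hm a b x μ
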